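/- Let (V, [,], 1) be a unital Leibniz algebra over k (1 central for the bracket) and ε : V → k a Lie character (ε([v,w]) = 0, ε(1) = 1). Then the augmented Leibniz differential d(v₁⋯vₙ) = Σ_{i<j} (−1)^{j−1} v₁⋯[vᵢ,vⱼ]⋯v̂ⱼ⋯vₙ + Σ_{j=1}^n (−1)^{j−1} ε(vⱼ) v₁⋯v̂ⱼ⋯vₙ is a differential (d∘d = 0) and the complex (V^⊗n, d) is acyclic, with contracting homotopy h(v₁⋯vₙ) = (−1)^n v₁⋯vₙ ⊗ 1. -/

import Mathlib

open TensorProduct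

universe u
variable {R V : Type u} [CommRing R] [AddCommGroup V] [Module R V]

variable (R V) in
/-- The iterated tensor power `V^{⊗n}` (left-nested: `TP 0 = R`, `TP (n+1) = V ⊗ TP n`),
bundled as an object of `ModuleCat R` so that the recursion carries its instances. -/
noncomputable def TPb : ℕ → ModuleCat.{u} R
  | 0 => ModuleCat.of R R
  | n + 1 => ModuleCat.of R (V ⊗[R] (TPb n))

variable (R V) in
/-- The iterated tensor power `V^{⊗n}` as a type. -/
noncomputable abbrev TP (n : ℕ) : Type u := (TPb R V n : Type u)

/-- `ε₁ = ε ⊗ id^{⊗n}` : applying `ε` to the first tensor factor of `V^{⊗(n+1)}`. -/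
noncomputable def eps1 (ε : V →ₗ[R] R) (n : ℕ) : TP R V (n+1) →ₗ[R] TP R V n :=
  (TensorProduct.lid R (TP R V n)).toLinearMap ∘ₗ LinearMap.rTensor (TP R V n) ε

/-- The multiplication `μ` applied to the factors `i, i+1` of `V^{⊗(n+1)}` (1-indexed,
`1 ≤ i ≤ n`; junk value `0` out of range). -/
noncomputable def mui (μL : V ⊗[R] V →ₗ[R] V) :
    (n : ℕ) → (i : ℕ) → TP R V (n+1) →ₗ[R] TP R V n
  | 0, _ => 0
  | _+1, 0 => 0
  | n+1, 1 => (LinearMap.rTensor (TP R V n) μL) ∘ₗ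
      (TensorProduct.assoc R V V (TP R V n)).symm.toLinearMap
  | n+1, i+2 => LinearMap.lTensor V (mui μL n (i+1))

/-- Right concatenation with the element `one`: `v₁⋯vₙ ↦ v₁⋯vₙ ⊗ 1`. -/
noncomputable def appendOne (one : V) : (n : ℕ) → TP R V n →ₗ[R] TP R V (n+1)
  | 0 => TensorProduct.mk R V R one
  | n+1 => LinearMap.lTensor V (appendOne one n)

/-- `ζ` applied to the last tensor factor of `V^{⊗(n+1)}`. -/
noncomputable def epsLast (ζ : V →ₗ[R] R) : (n : ℕ) → TP R V (n+1) →ₗ[R] TP R V n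
  | 0 => ζ ∘ₗ (TensorProduct.rid R V).toLinearMap
  | n+1 => LinearMap.lTensor V (epsLast ζ n)

/-- The flip of the first two tensor factors of `V^{⊗(n+2)}`. -/
noncomputable def flip12 (n : ℕ) : TP R V (n+2) →ₗ[R] TP R V (n+2) :=
  (TensorProduct.assoc R V V (TP R V n)).toLinearMap ∘ₗ
    (LinearMap.rTensor (TP R V n) (TensorProduct.comm R V V).toLinearMap) ∘ₗ
    (TensorProduct.assoc R V V (TP R V n)).symm.toLinearMap

/-- `id_V ⊗ f` viewed as a map of iterated tensor powers. -/
noncomputable def lT {m m' : ℕ} (f : TP R V m →ₗ[R] TP R V m') :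
    TP R V (m+1) →ₗ[R] TP R V (m'+1) :=
  LinearMap.lTensor V f

/-- The bracket applied to the factors `1, 2` of `V^{⊗(n+2)}` :
`v₁ ⊗ v₂ ⊗ y ↦ [v₁,v₂] ⊗ y`. -/
noncomputable def brHead (bL : V ⊗[R] V →ₗ[R] V) (n : ℕ) :
    TP R V (n+2) →ₗ[R] TP R V (n+1) :=
  (LinearMap.rTensor (TP R V n) bL) ∘ₗ
    (TensorProduct.assoc R V V (TP R V n)).symm.toLinearMap

/-- The `i = 1` part of the Loday differential on `V^{⊗(n+1)}`:
`K(v₁⋯v_{n+1}) = Σ_{j=2}^{n+1} (−1)^{j−1} [v₁,vⱼ] v₂ ⋯ v̂ⱼ ⋯ v_{n+1}`. -/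
noncomputable def KLei (bL : V ⊗[R] V →ₗ[R] V) : (n : ℕ) → TP R V (n+1) →ₗ[R] TP R V n
  | 0 => 0
  | 1 => - brHead bL 0
  | n+2 => - brHead bL (n+1) - flip12 n ∘ₗ lT (KLei bL (n+1)) ∘ₗ flip12 (n+1)

/-- The Loday differential
`d(v₁⋯vₙ) = Σ_{i<j} (−1)^{j−1} v₁⋯v_{i−1}[vᵢ,vⱼ]v_{i+1}⋯v̂ⱼ⋯vₙ` on `V^{⊗(n+1)}`. -/
noncomputable def dLei (bL : V ⊗[R] V →ₗ[R] V) : (n : ℕ) → TP R V (n+1) →ₗ[R] TP R V n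
  | 0 => 0
  | n+1 => KLei bL (n+1) - lT (dLei bL n)

/-- The Koszul-type part `E(v₁⋯vₙ) = Σⱼ (−1)^{j−1} ε(vⱼ) v₁⋯v̂ⱼ⋯vₙ` on `V^{⊗(n+1)}`. -/
noncomputable def ELei (ε : V →ₗ[R] R) : (n : ℕ) → TP R V (n+1) →ₗ[R] TP R V n
  | 0 => eps1 ε 0
  | n+1 => eps1 ε (n+1) - lT (ELei ε n)

/-!
Write `ρ_v x` (`bracketAct`) for the terms of `d(v x)` that bracket the first letter `v` into
the word `x`, so that `d(v x) = ρ_v x + ε(v) x - v d(x)`. By induction on the length, `d² = 0`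
reduces to `ε ∘ ρ_v = 0` and to `ρ_v` being a chain map; the latter comes from the Leibniz
identity through the commutation rule `bracketAct_bracketAct`. As `[v, 1] = 0`, `ρ_v` commutes
with appending `1`, which gives `d(x 1) = d(x) 1 + (-1)ⁿ x`, the homotopy identity.
-/

namespace LeibnizComplex

variable (br : V →ₗ[R] V →ₗ[R] V) (ε : V →ₗ[R] R)

noncomputable def cons {n : ℕ} : V →ₗ[R] TP R V n →ₗ[R] TP R V (n+1) :=
  TensorProduct.mk R V (TP R V n)

noncomputable def headMap (f : V →ₗ[R] V) (n : ℕ) : TP R V (n+1) →ₗ[R] TP R V (n+1) :=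
  LinearMap.rTensor (TP R V n) f

/-- The empty word has no second position; the value `0` there makes the recursion formulas
uniform in the length. -/
noncomputable def insSecond (u : V) : (n : ℕ) → TP R V n →ₗ[R] TP R V (n+1)
  | 0 => 0
  | n+1 => flip12 n ∘ₗ cons u

/-- `bracketAct br v n (u₁⋯uₙ) = Σⱼ (-1)ʲ [v,uⱼ] u₁⋯ûⱼ⋯uₙ`, the terms of the Leibniz
differential of `v u₁⋯uₙ` that bracket the first letter. -/
noncomputable def bracketAct (v : V) (n : ℕ) : TP R V n →ₗ[R] TP R V n :=
  KLei (TensorProduct.lift br) n ∘ₗ cons v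

noncomputable def augDiff (n : ℕ) : TP R V (n+1) →ₗ[R] TP R V n :=
  dLei (TensorProduct.lift br) n + ELei ε n

variable {br ε}

theorem TP.induction_on {n : ℕ} {motive : TP R V (n+1) → Prop} (x : TP R V (n+1))
    (zero : motive 0) (cons : ∀ a s, motive (cons a s))
    (add : ∀ x y, motive x → motive y → motive (x + y)) : motive x :=
  TensorProduct.induction_on x zero cons add

@[simp] theorem eps1_cons {n : ℕ} (v : V) (x : TP R V n) : eps1 ε n (cons v x) = ε v • x := rfl

@[simp] theorem lT_cons {m m' : ℕ} (f : TP R V m →ₗ[R] TP R V m') (v : V) (x : TP R V m) :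
    lT f (cons v x) = cons v (f x) := rfl

@[simp] theorem headMap_cons (f : V →ₗ[R] V) {n : ℕ} (a : V) (s : TP R V n) :
    headMap f n (cons a s) = cons (f a) s := rfl

@[simp] theorem insSecond_zero (u : V) : insSecond (R := R) u 0 = 0 := rfl

@[simp] theorem insSecond_cons (u : V) {n : ℕ} (a : V) (s : TP R V n) :
    insSecond u (n+1) (cons a s) = cons a (cons u s) := rfl

@[simp] theorem appendOne_zero_apply (one : V) (r : TP R V 0) :
    appendOne one 0 r = cons one r := rfl

@[simp] theorem appendOne_cons (one : V) {n : ℕ} (v : V) (x : TP R V n) :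
    appendOne one (n+1) (cons v x) = cons v (appendOne one n x) := rfl

@[simp] theorem bracketAct_zero (v : V) : bracketAct (R := R) br v 0 = 0 := rfl

@[simp] theorem bracketAct_cons (v : V) {n : ℕ} (u : V) (s : TP R V n) :
    bracketAct br v (n+1) (cons u s) =
      -cons (br v u) s - insSecond u n (bracketAct br v n s) := by
  rcases n with _ | n
  · simp only [insSecond_zero, bracketAct_zero, LinearMap.zero_apply, sub_zero]; rfl
  · rfl

@[simp] theorem augDiff_zero_cons (v : V) (r : TP R V 0) :
    augDiff br ε 0 (cons v r) = ε v • r := by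
  simp [augDiff, dLei, ELei]

@[simp] theorem augDiff_cons {n : ℕ} (v : V) (x : TP R V (n+1)) :
    augDiff br ε (n+1) (cons v x) =
      bracketAct br v (n+1) x + ε v • x - cons v (augDiff br ε n x) := by
  change bracketAct br v (n+1) x - cons v (dLei _ n x) + (ε v • x - cons v (ELei ε n x)) = _
  simp only [augDiff, LinearMap.add_apply, map_add]
  abel

theorem headMap_insSecond (f : V →ₗ[R] V) (u : V) {n : ℕ} (y : TP R V (n+1)) :
    headMap f (n+1) (insSecond u (n+1) y) = insSecond u (n+1) (headMap f n y) := by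
  induction y using TP.induction_on <;> simp_all

theorem insSecond_insSecond (a u : V) {n : ℕ} (y : TP R V n) :
    insSecond a (n+1) (insSecond u n y) = lT (insSecond u n) (insSecond a n y) := by
  rcases n with _ | n
  · simp
  · induction y using TP.induction_on <;> simp_all

theorem appendOne_insSecond (one u : V) {n : ℕ} (y : TP R V (n+1)) :
    appendOne one (n+2) (insSecond u (n+1) y) = insSecond u (n+2) (appendOne one (n+1) y) := by
  induction y using TP.induction_on <;> simp_all

theorem eps1_insSecond (u : V) {n : ℕ} (y : TP R V (n+1)) :
    eps1 ε (n+1) (insSecond u (n+1) y) = cons u (eps1 ε n y) := by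
  induction y using TP.induction_on <;> simp_all

theorem eps1_bracketAct (hε : ∀ v w, ε (br v w) = 0) (v : V) {n : ℕ} (x : TP R V (n+1)) :
    eps1 ε n (bracketAct br v (n+1) x) = 0 := by
  induction n with
  | zero => induction x using TP.induction_on <;> simp_all
  | succ n ih => induction x using TP.induction_on <;> simp_all [eps1_insSecond]

theorem headMap_bracketAct
    (hLeibniz : ∀ v w u : V, br v (br w u) = br (br v w) u - br (br v u) w)
    (v w : V) {n : ℕ} (x : TP R V (n+1)) :
    headMap (br v) n (bracketAct br w (n+1) x) +
      headMap (br.flip w) n (bracketAct br v (n+1) x) = bracketAct br (br v w) (n+1) x := by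
  induction n with
  | zero =>
    induction x using TP.induction_on with
    | zero => simp
    | cons u r =>
      simp only [bracketAct_cons, insSecond_zero, bracketAct_zero, LinearMap.zero_apply, sub_zero,
        map_neg, headMap_cons, hLeibniz, map_sub, LinearMap.sub_apply, LinearMap.flip_apply]
      abel
    | add x y hx hy => simp only [map_add]; linear_combination (norm := module) hx + hy
  | succ n ih =>
    induction x using TP.induction_on with
    | zero => simp
    | cons u s =>
      simp only [bracketAct_cons, map_sub, map_neg, map_add, headMap_cons, LinearMap.flip_apply,
        headMap_insSecond, hLeibniz, LinearMap.sub_apply, ← ih]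
      abel
    | add x y hx hy => simp only [map_add]; linear_combination (norm := module) hx + hy

theorem bracketAct_insSecond (v u : V) {n : ℕ} (t : TP R V (n+1)) :
    bracketAct br v (n+2) (insSecond u (n+1) t) =
      cons (br v u) t - insSecond u (n+1) (headMap (br v) n t) -
        lT (insSecond u n) (bracketAct br v (n+1) t + headMap (br v) n t) := by
  induction t using TP.induction_on with
  | zero => simp
  | cons a s =>
    simp only [insSecond_cons, bracketAct_cons, map_sub, map_neg, map_add, headMap_cons, lT_cons,
      insSecond_insSecond]
    abel
  | add x y hx hy => simp only [map_add, hx, hy]; abel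

theorem lT_bracketAct_insSecond (w u : V) {n : ℕ} (t : TP R V (n+1)) :
    lT (bracketAct br w (n+1)) (insSecond u (n+1) t) =
      -insSecond (br w u) (n+1) t - lT (insSecond u n) (lT (bracketAct br w n) t) := by
  induction t using TP.induction_on with
  | zero => simp
  | cons a s => simp
  | add x y hx hy => simp only [map_add, hx, hy]; abel

theorem bracketAct_bracketAct
    (hLeibniz : ∀ v w u : V, br v (br w u) = br (br v w) u - br (br v u) w)
    (v w : V) {n : ℕ} (x : TP R V (n+1)) :
    bracketAct br v (n+1) (bracketAct br w (n+1) x) + bracketAct br (br v w) (n+1) x =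
      headMap (br.flip w) n (bracketAct br v (n+1) x) +
        lT (bracketAct br w n) (bracketAct br v (n+1) x) := by
  induction n with
  | zero =>
    induction x using TP.induction_on with
    | zero => simp
    | cons u r =>
      simp only [bracketAct_cons, insSecond_zero, bracketAct_zero, LinearMap.zero_apply, sub_zero,
        map_neg, hLeibniz, map_sub, LinearMap.sub_apply, headMap_cons, LinearMap.flip_apply,
        lT_cons, map_zero, neg_zero, add_zero]
      abel
    | add x y hx hy => simp only [map_add]; linear_combination (norm := module) hx + hy
  | succ n ih =>
    induction x using TP.induction_on with
    | zero => simp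
    | cons u s =>
      simp only [bracketAct_cons, map_sub, map_neg, bracketAct_insSecond,
        lT_bracketAct_insSecond, headMap_insSecond, headMap_cons, lT_cons, LinearMap.flip_apply]
      rw [eq_sub_of_add_eq (ih s), ← headMap_bracketAct hLeibniz v w s, hLeibniz]
      simp only [map_add, map_sub, LinearMap.sub_apply]
      abel
    | add x y hx hy => simp only [map_add]; linear_combination (norm := module) hx + hy

theorem augDiff_insSecond (w : V) {n : ℕ} (t : TP R V (n+1)) :
    augDiff br ε (n+1) (insSecond w (n+1) t) =
      -insSecond w n (augDiff br ε n t) - ε w • t - headMap (br.flip w) n t -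
        lT (bracketAct br w n) t + cons w (eps1 ε n t) + insSecond w n (eps1 ε n t) := by
  induction t using TP.induction_on with
  | zero => simp
  | cons u s =>
    rcases n with _ | n <;>
      simp only [insSecond_cons, insSecond_zero, augDiff_cons, augDiff_zero_cons, bracketAct_cons,
        bracketAct_zero, headMap_cons, LinearMap.flip_apply, lT_cons, eps1_cons, map_add, map_sub,
        map_smul, map_zero, LinearMap.zero_apply] <;>
      abel
  | add x y hx hy => simp only [map_add, smul_add, hx, hy]; abel

theorem augDiff_bracketAct (hε : ∀ v w, ε (br v w) = 0)
    (hLeibniz : ∀ v w u : V, br v (br w u) = br (br v w) u - br (br v u) w)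
    (v : V) {n : ℕ} (x : TP R V (n+1)) :
    augDiff br ε n (bracketAct br v (n+1) x) = bracketAct br v n (augDiff br ε n x) := by
  induction n with
  | zero => induction x using TP.induction_on <;> simp_all
  | succ n ih =>
    induction x using TP.induction_on with
    | zero => simp
    | cons w x =>
      simp only [bracketAct_cons, augDiff_cons, map_sub, map_neg, map_add, map_smul,
        augDiff_insSecond, eps1_bracketAct hε, hε, ih]
      rw [eq_sub_of_add_eq (bracketAct_bracketAct hLeibniz v w x)]
      simp only [zero_smul, add_zero, map_zero]
      abel
    | add x y hx hy => simp only [map_add, hx, hy]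

theorem augDiff_comp_augDiff (hε : ∀ v w, ε (br v w) = 0)
    (hLeibniz : ∀ v w u : V, br v (br w u) = br (br v w) u - br (br v u) w)
    {n : ℕ} (x : TP R V (n+2)) :
    augDiff br ε n (augDiff br ε (n+1) x) = 0 := by
  induction n with
  | zero =>
    induction x using TP.induction_on with
    | zero => simp
    | cons v s => simp [augDiff_bracketAct hε hLeibniz]
    | add x y hx hy => simp only [map_add, hx, hy, add_zero]
  | succ n ih =>
    induction x using TP.induction_on with
    | zero => simp
    | cons v s => simp [augDiff_bracketAct hε hLeibniz, ih]
    | add x y hx hy => simp only [map_add, hx, hy, add_zero]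

theorem bracketAct_appendOne {one : V} (hone : ∀ v, br v one = 0) (v : V) {n : ℕ}
    (x : TP R V n) :
    bracketAct br v (n+1) (appendOne one n x) = appendOne one n (bracketAct br v n x) := by
  induction n with
  | zero => simp [hone]
  | succ n ih =>
    induction x using TP.induction_on with
    | zero => simp
    | cons w s => rcases n with _ | n <;> simp [hone, ih, appendOne_insSecond]
    | add x y hx hy => simp only [map_add, hx, hy]

theorem augDiff_appendOne {one : V} (hone : ∀ v, br v one = 0) (hεone : ε one = 1) {n : ℕ}
    (x : TP R V (n+1)) :
    augDiff br ε (n+1) (appendOne one (n+1) x) =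
      appendOne one n (augDiff br ε n x) + (-1 : R) ^ (n+1) • x := by
  induction n with
  | zero =>
    induction x using TP.induction_on with
    | zero => simp
    | cons v r => simp [hone, hεone, sub_eq_add_neg]
    | add x y hx hy => simp only [map_add, smul_add, hx, hy]; abel
  | succ n ih =>
    induction x using TP.induction_on with
    | zero => simp
    | cons v s =>
      simp only [appendOne_cons, augDiff_cons, bracketAct_appendOne hone, ih, pow_succ, mul_neg,
        mul_one, neg_smul, map_add, map_neg, map_smul, map_sub, neg_neg]
      abel
    | add x y hx hy => simp only [map_add, smul_add, hx, hy]; abel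

end LeibnizComplex

open LeibnizComplex

theorem augmented_leibniz_complex_acyclic_general
    (br : V →ₗ[R] V →ₗ[R] V) (one : V)
    (hLeibniz : ∀ v w u : V, br v (br w u) = br (br v w) u - br (br v u) w)
    (hcentral_r : ∀ v : V, br v one = 0)
    (ε : V →ₗ[R] R)
    (hεbr : ∀ v w : V, ε (br v w) = 0) (hεone : ε one = 1) :
    (∀ n : ℕ,
      (dLei (TensorProduct.lift br) n + ELei ε n) ∘ₗ
        (dLei (TensorProduct.lift br) (n+1) + ELei ε (n+1)) = 0) ∧
    (∀ n : ℕ,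
      (((-1 : R)^n) • appendOne one n) ∘ₗ (dLei (TensorProduct.lift br) n + ELei ε n) +
        (dLei (TensorProduct.lift br) (n+1) + ELei ε (n+1)) ∘ₗ
          (((-1 : R)^(n+1)) • appendOne one (n+1)) =
      LinearMap.id) := by
  refine ⟨fun n => LinearMap.ext fun x => augDiff_comp_augDiff hεbr hLeibniz x,
    fun n => LinearMap.ext fun x => ?_⟩
  change (-1 : R) ^ n • appendOne one n (augDiff br ε n x) +
    augDiff br ε (n+1) ((-1 : R) ^ (n+1) • appendOne one (n+1) x) = x
  rw [map_smul, augDiff_appendOne hcentral_r hεone, smul_add, smul_smul, ← pow_add,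
    Even.neg_one_pow ⟨n+1, rfl⟩, one_smul, pow_succ, mul_neg_one, neg_smul]
  abel

/-- for a unital Leibniz algebra `(V, [,], 1)` and a Lie character `ε`,
the augmented Leibniz differential
`d(v₁⋯vₙ) = Σ_{i<j} (−1)^{j−1} v₁⋯[vᵢ,vⱼ]⋯v̂ⱼ⋯vₙ + Σⱼ (−1)^{j−1} ε(vⱼ)v₁⋯v̂ⱼ⋯vₙ`
squares to zero and the complex is acyclic, with contracting homotopy
`h(v₁⋯vₙ) = (−1)ⁿ v₁⋯vₙ ⊗ 1`. -/
theorem augmented_leibniz_complex_acyclic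
    (br : V →ₗ[R] V →ₗ[R] V) (one : V)
    (hLeibniz : ∀ v w u : V, br v (br w u) = br (br v w) u - br (br v u) w)
    (hcentral_l : ∀ v : V, br one v = 0)
    (hcentral_r : ∀ v : V, br v one = 0)
    (ε : V →ₗ[R] R)
    (hεbr : ∀ v w : V, ε (br v w) = 0) (hεone : ε one = 1) :
    (∀ n : ℕ,
      (dLei (TensorProduct.lift br) n + ELei ε n) ∘ₗ
        (dLei (TensorProduct.lift br) (n+1) + ELei ε (n+1)) = 0) ∧
    (∀ n : ℕ,
      (((-1 : R)^n) • appendOne one n) ∘ₗ (dLei (TensorProduct.lift br) n + ELei ε n) +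
        (dLei (TensorProduct.lift br) (n+1) + ELei ε (n+1)) ∘ₗ
          (((-1 : R)^(n+1)) • appendOne one (n+1)) =
      LinearMap.id) :=
  augmented_leibniz_complex_acyclic_general br one hLeibniz hcentral_r ε hεbr hεone
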